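/- arXiv:1909.10092 — 7 statements merged into one kernel-verified Lean document; each statement's English description precedes it below -/
import Mathlib

section
/- Suppose Φₓ, Φᵤ are strictly causal bounded linear operators satisfying (I − S₊A)Φₓ − S₊BΦᵤ = S₊, where A, B are bounded causal linear operators. Then the block lower-triangular matrix representation (Φₓ(i,j)) of Φₓ satisfies Φₓ(i, i−1) = I for all i ≥ 1, i.e., Φₓ has identity matrices on its first block subdiagonal. -/
/-- The right shift operator `S₊` on `ℝⁿ`-valued sequences, as a linear map. -/
noncomputable def shiftR (n : ℕ) : (ℕ → (Fin n → ℝ)) →ₗ[ℝ] (ℕ → (Fin n → ℝ)) where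
  toFun x := fun t => if t = 0 then 0 else x (t - 1)
  map_add' x y := by funext t; by_cases h : t = 0 <;> simp [h]
  map_smul' c x := by funext t; by_cases h : t = 0 <;> simp [h]

/-- A linear operator on sequences is causal if `(Gx)ₜ` depends only on `x₀, …, xₜ`. -/
def CausalL {n m : ℕ} (G : (ℕ → (Fin n → ℝ)) →ₗ[ℝ] (ℕ → (Fin m → ℝ))) : Prop :=
  ∀ x y : ℕ → (Fin n → ℝ), ∀ t : ℕ, (∀ s ≤ t, x s = y s) → G x t = G y t

/-- A linear operator is strictly causal if `(Gx)ₜ` depends only on `x₀, …, x_{t−1}`. -/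
def StrictlyCausalL {n m : ℕ} (G : (ℕ → (Fin n → ℝ)) →ₗ[ℝ] (ℕ → (Fin m → ℝ))) : Prop :=
  ∀ x y : ℕ → (Fin n → ℝ), ∀ t : ℕ, (∀ s < t, x s = y s) → G x t = G y t

/-!
Feed `Φₓ` the impulse `w` equal to `v` at time `t` and `0` elsewhere. Evaluating the constraint
at time `t + 1` gives `(Φₓ w)ₜ₊₁ = wₜ + (A Φₓ w)ₜ + (B Φᵤ w)ₜ`. By strict causality `Φₓ w` and
`Φᵤ w` vanish up to time `t`, so by causality of `A` and `B` the last two terms vanish and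
`Φₓ(t+1, t) v = v`.
-/

theorem shiftR_apply_succ {n : ℕ} (x : ℕ → (Fin n → ℝ)) (t : ℕ) : shiftR n x (t + 1) = x t := by
  simp [shiftR]

theorem CausalL.apply_eq_zero {n m : ℕ} {G : (ℕ → (Fin n → ℝ)) →ₗ[ℝ] (ℕ → (Fin m → ℝ))}
    (hG : CausalL G) {x : ℕ → (Fin n → ℝ)} {t : ℕ} (hx : ∀ s ≤ t, x s = 0) : G x t = 0 := by
  simpa using hG x 0 t hx

theorem StrictlyCausalL.apply_eq_zero {n m : ℕ} {G : (ℕ → (Fin n → ℝ)) →ₗ[ℝ] (ℕ → (Fin m → ℝ))}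
    (hG : StrictlyCausalL G) {x : ℕ → (Fin n → ℝ)} {t : ℕ} (hx : ∀ s < t, x s = 0) :
    ∀ r ≤ t, G x r = 0 := fun r hr => by
  simpa using hG x 0 r fun s hs => hx s (by omega)

theorem apply_succ_eq_of_constraint {n p : ℕ}
    {A : (ℕ → (Fin n → ℝ)) →ₗ[ℝ] (ℕ → (Fin n → ℝ))}
    {B : (ℕ → (Fin p → ℝ)) →ₗ[ℝ] (ℕ → (Fin n → ℝ))}
    {Φx : (ℕ → (Fin n → ℝ)) →ₗ[ℝ] (ℕ → (Fin n → ℝ))}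
    {Φu : (ℕ → (Fin n → ℝ)) →ₗ[ℝ] (ℕ → (Fin p → ℝ))}
    (hA : CausalL A) (hB : CausalL B) (hΦx : StrictlyCausalL Φx) (hΦu : StrictlyCausalL Φu)
    (hconstraint :
      (LinearMap.id - (shiftR n) ∘ₗ A) ∘ₗ Φx - (shiftR n) ∘ₗ B ∘ₗ Φu = shiftR n)
    {w : ℕ → (Fin n → ℝ)} {t : ℕ} (hw : ∀ s < t, w s = 0) :
    Φx w (t + 1) = w t := by
  have hAΦx : A (Φx w) t = 0 := hA.apply_eq_zero (hΦx.apply_eq_zero hw)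
  have hBΦu : B (Φu w) t = 0 := hB.apply_eq_zero (hΦu.apply_eq_zero hw)
  simpa only [LinearMap.sub_apply, LinearMap.comp_apply, LinearMap.id_apply, Pi.sub_apply,
    shiftR_apply_succ, hAΦx, hBΦu, sub_zero] using
    congrFun (LinearMap.congr_fun hconstraint w) (t + 1)

theorem sum_range_succ_mulVec_single {R m k : Type*} [NonUnitalNonAssocSemiring R] [Fintype k]
    (M : ℕ → Matrix m k R) (t : ℕ) (v : k → R) :
    ∑ s ∈ Finset.range (t + 1), (M s).mulVec ((Pi.single t v : ℕ → k → R) s) =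
      (M t).mulVec v := by
  rw [Finset.sum_eq_single_of_mem t (Finset.self_mem_range_succ t) fun s _ hs => by simp [hs]]
  simp

/-- If strictly causal `Φₓ, Φᵤ` satisfy `(I − S₊A)Φₓ − S₊BΦᵤ = S₊` with `A, B` causal, then
the block lower-triangular matrix representation of `Φₓ` has identity matrices on its first
block subdiagonal: `Φₓ(i, i−1) = I` for all `i ≥ 1`. -/
theorem stmt10 {n p : ℕ}
    (A : (ℕ → (Fin n → ℝ)) →ₗ[ℝ] (ℕ → (Fin n → ℝ)))
    (B : (ℕ → (Fin p → ℝ)) →ₗ[ℝ] (ℕ → (Fin n → ℝ)))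
    (Φx : (ℕ → (Fin n → ℝ)) →ₗ[ℝ] (ℕ → (Fin n → ℝ)))
    (Φu : (ℕ → (Fin n → ℝ)) →ₗ[ℝ] (ℕ → (Fin p → ℝ)))
    (hA : CausalL A) (hB : CausalL B)
    (hΦx : StrictlyCausalL Φx) (hΦu : StrictlyCausalL Φu)
    (hconstraint :
      (LinearMap.id - (shiftR n) ∘ₗ A) ∘ₗ Φx - (shiftR n) ∘ₗ B ∘ₗ Φu = shiftR n)
    (Φmat : ℕ → ℕ → Matrix (Fin n) (Fin n) ℝ)
    (hmat : ∀ (w : ℕ → (Fin n → ℝ)) (t : ℕ),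
      Φx w t = ∑ s ∈ Finset.range t, (Φmat t s).mulVec (w s)) :
    ∀ i : ℕ, 1 ≤ i → Φmat i (i - 1) = 1 := by
  intro i hi
  obtain ⟨t, rfl⟩ : ∃ t, i = t + 1 := ⟨i - 1, by omega⟩
  rw [Nat.add_sub_cancel]
  refine Matrix.mulVec_injective (funext fun v => ?_)
  calc (Φmat (t + 1) t).mulVec v
      = Φx (Pi.single t v) (t + 1) := by rw [hmat, sum_range_succ_mulVec_single]
    _ = (Pi.single t v : ℕ → Fin n → ℝ) t :=
      apply_succ_eq_of_constraint hA hB hΦx hΦu hconstraint fun s hs => by simp [hs.ne]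
    _ = (1 : Matrix (Fin n) (Fin n) ℝ).mulVec v := by rw [Pi.single_eq_same, Matrix.one_mulVec]
end

section
/- Let Φₓ be a strictly causal linear operator on sequences whose matrix representation has identity blocks on the first subdiagonal, i.e., Φₓ(i, i−1) = I. Then the restriction of I − ΦₓS₋ to strictly causal signals (sequences with zeroth entry zero) is strictly causal, i.e., ((I − ΦₓS₋)ŵ)ₜ depends only on ŵ₁,…,ŵ_{t−1} — hence the feedback loop ŵ = x + (I − ΦₓS₋)ŵ with ŵ₀ = 0 is well posed, admitting a unique solution ŵ for each x. -/
noncomputable def whAux {n : ℕ} (Φmat : ℕ → ℕ → Matrix (Fin n) (Fin n) ℝ)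
    (x : ℕ → Fin n → ℝ) : ℕ → Fin n → ℝ
  | 0 => 0
  | (t+1) => x (t+1) -
      ∑ s ∈ (Finset.range t).attach, (Φmat (t+1) s.1).mulVec (whAux Φmat x (s.1+1))
  decreasing_by exact Nat.succ_lt_succ (Finset.mem_range.mp s.2)

lemma whAux_zero {n : ℕ} (Φmat : ℕ → ℕ → Matrix (Fin n) (Fin n) ℝ)
    (x : ℕ → Fin n → ℝ) : whAux Φmat x 0 = 0 := by rw [whAux]

lemma whAux_succ {n : ℕ} (Φmat : ℕ → ℕ → Matrix (Fin n) (Fin n) ℝ)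
    (x : ℕ → Fin n → ℝ) (t : ℕ) :
    whAux Φmat x (t+1) = x (t+1) -
      ∑ s ∈ Finset.range t, (Φmat (t+1) s).mulVec (whAux Φmat x (s+1)) := by
  rw [whAux]
  exact congrArg _ (Finset.sum_attach (Finset.range t)
    (fun s => (Φmat (t+1) s).mulVec (whAux Φmat x (s+1))))

/-- Let `Φₓ` be the strictly causal linear operator on `ℝⁿ`-valued sequences given by a block
lower-triangular matrix `(Φₓ(i,j))` with `Φₓ(i,j) = 0` for `j ≥ i` and identity blocks on the
first subdiagonal, `Φₓ(i, i−1) = I`.  Then the restriction of `I − ΦₓS₋` to strictly causal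
signals (those with zeroth entry zero) is strictly causal — `((I − ΦₓS₋)wh)ₜ` depends only on
`wh₁, …, wh_{t−1}` — and hence the feedback loop `wh = x + (I − ΦₓS₋)wh`, `wh₀ = 0`, is well
posed, admitting a unique solution `wh` for each `x`. -/
theorem stmt11 {n : ℕ}
    (Φmat : ℕ → ℕ → Matrix (Fin n) (Fin n) ℝ)
    (hlow : ∀ i j, i ≤ j → Φmat i j = 0)
    (hsub : ∀ i : ℕ, 1 ≤ i → Φmat i (i - 1) = 1)
    -- `Φop w = Φₓ w`, the action of the operator given by the matrix `(Φₓ(i,j))`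
    (Φop : (ℕ → (Fin n → ℝ)) → (ℕ → (Fin n → ℝ)))
    (hΦop : ∀ w t, Φop w t = ∑ s ∈ Finset.range t, (Φmat t s).mulVec (w s))
    -- `Sminus` is the left shift
    (Sminus : (ℕ → (Fin n → ℝ)) → (ℕ → (Fin n → ℝ)))
    (hSminus : ∀ w t, Sminus w t = w (t + 1)) :
    -- strict causality of `I − ΦₓS₋` on strictly causal signals
    (∀ wh₁ wh₂ : ℕ → (Fin n → ℝ), wh₁ 0 = 0 → wh₂ 0 = 0 →
      ∀ t : ℕ, (∀ s < t, wh₁ s = wh₂ s) →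
        wh₁ t - Φop (Sminus wh₁) t = wh₂ t - Φop (Sminus wh₂) t) ∧
    -- well-posedness of the feedback loop `wh = x + (I − ΦₓS₋)wh`, `wh₀ = 0`
    (∀ x : ℕ → (Fin n → ℝ),
      ∃! wh : ℕ → (Fin n → ℝ), wh 0 = 0 ∧
        ∀ t : ℕ, 1 ≤ t → wh t = x t + (wh t - Φop (Sminus wh) t)) := by
  -- key computation: Φop (Sminus w) (t+1) = (∑ s < t, Φmat (t+1) s ⬝ w (s+1)) + w (t+1)
  have key : ∀ (w : ℕ → Fin n → ℝ) (t : ℕ),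
      Φop (Sminus w) (t + 1)
        = (∑ s ∈ Finset.range t, (Φmat (t+1) s).mulVec (w (s+1))) + w (t+1) := by
    intro w t
    rw [hΦop, Finset.sum_range_succ]
    have h1 : Φmat (t+1) t = 1 := by simpa using hsub (t+1) (Nat.le_add_left 1 t)
    simp [hSminus, h1, Matrix.one_mulVec]
  constructor
  · intro wh₁ wh₂ h10 h20 t ht
    cases t with
    | zero => simp [hΦop, h10, h20]
    | succ t =>
      rw [key, key]
      have hsum : (∑ s ∈ Finset.range t, (Φmat (t+1) s).mulVec (wh₁ (s+1)))
          = ∑ s ∈ Finset.range t, (Φmat (t+1) s).mulVec (wh₂ (s+1)) := by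
        apply Finset.sum_congr rfl
        intro s hs
        rw [ht (s+1) (Nat.succ_lt_succ (Finset.mem_range.mp hs))]
      rw [hsum]
      abel
  · intro x
    refine ⟨whAux Φmat x, ⟨whAux_zero Φmat x, ?_⟩, ?_⟩
    · intro t ht
      obtain ⟨t, rfl⟩ := Nat.exists_eq_add_of_le ht
      rw [Nat.add_comm 1 t, key]
      rw [whAux_succ]
      abel
    · intro wh ⟨h0, heq⟩
      funext t
      induction t using Nat.strong_induction_on with
      | _ t ih =>
        cases t with
        | zero => rw [h0, whAux_zero]
        | succ t =>
          have h := heq (t+1) (Nat.le_add_left 1 t)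
          rw [key] at h
          have hP : wh (t+1)
              = x (t+1) - ∑ s ∈ Finset.range t, (Φmat (t+1) s).mulVec (wh (s+1)) := by
            have := h
            linear_combination this
          rw [hP, whAux_succ]
          congr 1
          apply Finset.sum_congr rfl
          intro s hs
          rw [ih (s+1) (Nat.succ_lt_succ (Finset.mem_range.mp hs))]
end

section
/- Suppose Φₓ, Φᵤ satisfy (I − S₊A)Φₓ − S₊BΦᵤ = S₊ with A, B, Φₓ, Φᵤ bounded causal linear operators and Φₓ, Φᵤ strictly causal. Then the state trajectory of the closed loop system x = S₊Ax + S₊Bu + S₊w, u = ΦᵤS₋ŵ, ŵ = x + (I − ΦₓS₋)ŵ (with ŵ₀ = 0, δ-perturbations zero) satisfies x = Φₓw and u = Φᵤw for every disturbance w. -/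
/-- The left shift operator `S₋` on `ℝⁿ`-valued sequences, as a linear map. -/
noncomputable def shiftL (n : ℕ) : (ℕ → (Fin n → ℝ)) →ₗ[ℝ] (ℕ → (Fin n → ℝ)) where
  toFun x := fun t => x (t + 1)
  map_add' x y := by funext t; simp
  map_smul' c x := by funext t; simp

/-- If strictly causal `Φₓ, Φᵤ` satisfy `(I − S₊A)Φₓ − S₊BΦᵤ = S₊` with `A, B` causal, then
the closed loop `x = S₊Ax + S₊Bu + S₊w`, `u = ΦᵤS₋ŵ`, `ŵ = x + (I − ΦₓS₋)ŵ` (with `ŵ₀ = 0`)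
satisfies `x = Φₓw` and `u = Φᵤw` for every disturbance `w`. -/
theorem stmt12 {n p : ℕ}
    (A : (ℕ → (Fin n → ℝ)) →ₗ[ℝ] (ℕ → (Fin n → ℝ)))
    (B : (ℕ → (Fin p → ℝ)) →ₗ[ℝ] (ℕ → (Fin n → ℝ)))
    (Φx : (ℕ → (Fin n → ℝ)) →ₗ[ℝ] (ℕ → (Fin n → ℝ)))
    (Φu : (ℕ → (Fin n → ℝ)) →ₗ[ℝ] (ℕ → (Fin p → ℝ)))
    (hA : CausalL A) (hB : CausalL B)
    (hΦx : StrictlyCausalL Φx) (hΦu : StrictlyCausalL Φu)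
    (hconstraint :
      (LinearMap.id - (shiftR n) ∘ₗ A) ∘ₗ Φx - (shiftR n) ∘ₗ B ∘ₗ Φu = shiftR n)
    (w x wh : ℕ → (Fin n → ℝ)) (u : ℕ → (Fin p → ℝ))
    (hplant : x = shiftR n (A x) + shiftR n (B u) + shiftR n w)
    (hu : u = Φu (shiftL n wh))
    (hwh0 : wh 0 = 0)
    (hwh : ∀ t, wh t = x t + (wh t - Φx (shiftL n wh) t)) :
    x = Φx w ∧ u = Φu w := by
  set v := shiftL n wh with hv
  have hx : x = Φx v := by
    funext t i
    have h := congrFun (hwh t) i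
    simp only [Pi.add_apply, Pi.sub_apply] at h
    linarith
  have hc : Φx v - shiftR n (A (Φx v)) - shiftR n (B (Φu v)) = shiftR n v := by
    have h := LinearMap.congr_fun hconstraint v
    simpa [LinearMap.sub_apply, LinearMap.comp_apply, map_sub, sub_sub] using h
  have hp : Φx v = shiftR n (A (Φx v)) + shiftR n (B (Φu v)) + shiftR n w := by
    rw [← hx, ← hu]; exact hplant
  have hsw : shiftR n v = shiftR n w := by
    rw [← hc]; nth_rewrite 1 [hp]; abel
  have hvw : v = w := by
    funext t
    have h := congrFun hsw (t + 1)
    simpa [shiftR] using h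
  rw [← hvw]
  exact ⟨hx, hu⟩
end

section
/- Suppose Φₓ, Φᵤ are bounded causal linear operators with (I − S₊A)Φₓ − S₊BΦᵤ = S₊(I − Δ) for some strictly causal linear operator Δ. Then for the perturbed closed loop (the controller built from Φₓ, Φᵤ applied to the plant x = S₊Ax + S₊Bu + S₊w), the state and input satisfy x = Φₓ(I − Δ)⁻¹w and u = Φᵤ(I − Δ)⁻¹w, where (I − Δ)⁻¹ exists as a map on the extended sequence space by strict causality of Δ. -/
noncomputable def xiFun {n : ℕ} (Δ : (ℕ → (Fin n → ℝ)) →ₗ[ℝ] (ℕ → (Fin n → ℝ)))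
    (v : ℕ → (Fin n → ℝ)) : ℕ → (Fin n → ℝ)
  | t => v t + Δ (fun s => if _h : s < t then xiFun Δ v s else 0) t
termination_by t => t

lemma xiFun_spec {n : ℕ} {Δ : (ℕ → (Fin n → ℝ)) →ₗ[ℝ] (ℕ → (Fin n → ℝ))}
    (hΔ : ∀ x y : ℕ → (Fin n → ℝ), ∀ t : ℕ, (∀ s < t, x s = y s) → Δ x t = Δ y t)
    (v : ℕ → (Fin n → ℝ)) (t : ℕ) :
    xiFun Δ v t = v t + Δ (xiFun Δ v) t := by
  rw [xiFun]
  congr 1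
  exact hΔ _ _ t (fun s hs => by simp [hs])

lemma xiFun_left {n : ℕ} {Δ : (ℕ → (Fin n → ℝ)) →ₗ[ℝ] (ℕ → (Fin n → ℝ))}
    (hΔ : ∀ x y : ℕ → (Fin n → ℝ), ∀ t : ℕ, (∀ s < t, x s = y s) → Δ x t = Δ y t)
    (v : ℕ → (Fin n → ℝ)) : xiFun Δ (v - Δ v) = v := by
  funext t
  induction t using Nat.strong_induction_on with
  | _ t ih =>
    rw [xiFun_spec hΔ]
    have : Δ (xiFun Δ (v - Δ v)) t = Δ v t := hΔ _ _ t (fun s hs => ih s hs)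
    rw [this]
    simp

/-- If causal `Φₓ, Φᵤ` satisfy `(I − S₊A)Φₓ − S₊BΦᵤ = S₊(I − Δ)` for a strictly causal
linear `Δ`, then the perturbed closed loop (the controller built from `Φₓ, Φᵤ` applied to the
plant `x = S₊Ax + S₊Bu + S₊w`) satisfies `x = Φₓ(I − Δ)⁻¹w` and `u = Φᵤ(I − Δ)⁻¹w`, where
`(I − Δ)⁻¹` exists on the extended space by strict causality of `Δ`. -/
theorem stmt13 {n p : ℕ}
    (A : (ℕ → (Fin n → ℝ)) →ₗ[ℝ] (ℕ → (Fin n → ℝ)))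
    (B : (ℕ → (Fin p → ℝ)) →ₗ[ℝ] (ℕ → (Fin n → ℝ)))
    (Φx : (ℕ → (Fin n → ℝ)) →ₗ[ℝ] (ℕ → (Fin n → ℝ)))
    (Φu : (ℕ → (Fin n → ℝ)) →ₗ[ℝ] (ℕ → (Fin p → ℝ)))
    (Δ : (ℕ → (Fin n → ℝ)) →ₗ[ℝ] (ℕ → (Fin n → ℝ)))
    (hA : CausalL A) (hB : CausalL B)
    (hΦx : CausalL Φx) (hΦu : CausalL Φu)
    (hΔ : StrictlyCausalL Δ)
    (hconstraint :
      (LinearMap.id - (shiftR n) ∘ₗ A) ∘ₗ Φx - (shiftR n) ∘ₗ B ∘ₗ Φu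
        = (shiftR n) ∘ₗ (LinearMap.id - Δ))
    (w x wh : ℕ → (Fin n → ℝ)) (u : ℕ → (Fin p → ℝ))
    (hplant : x = shiftR n (A x) + shiftR n (B u) + shiftR n w)
    (hu : u = Φu (shiftL n wh))
    (hwh0 : wh 0 = 0)
    (hwh : ∀ t, wh t = x t + (wh t - Φx (shiftL n wh) t)) :
    ∃ Ξ : (ℕ → (Fin n → ℝ)) → (ℕ → (Fin n → ℝ)),
      (∀ v, Ξ v - Δ (Ξ v) = v) ∧ (∀ v, Ξ (v - Δ v) = v) ∧
      x = Φx (Ξ w) ∧ u = Φu (Ξ w) := by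
  set y := shiftL n wh with hy
  have hx : x = Φx y := by
    funext t i
    have h := congrFun (hwh t) i
    simp only [Pi.add_apply, Pi.sub_apply] at h
    linarith
  have hkey := LinearMap.congr_fun hconstraint y
  simp only [LinearMap.sub_apply, LinearMap.comp_apply, LinearMap.id_apply,
    LinearMap.map_sub] at hkey
  have hw : y - Δ y = w := by
    funext t
    have h1 := congrFun hkey (t + 1)
    have h2 := congrFun hplant (t + 1)
    rw [hx, hu] at h2
    simp only [Pi.sub_apply, Pi.add_apply, shiftR, LinearMap.coe_mk, AddHom.coe_mk,
      Nat.add_sub_cancel, if_neg (Nat.succ_ne_zero t)] at h1 h2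
    rw [h2] at h1
    funext i
    have := congrFun h1 i
    simp only [Pi.add_apply, Pi.sub_apply] at this ⊢
    linarith
  have hΞy : xiFun Δ w = y := by rw [← hw]; exact xiFun_left hΔ y
  refine ⟨xiFun Δ, ?_, fun v => xiFun_left hΔ v, by rw [hΞy]; exact hx,
    by rw [hΞy]; exact hu⟩
  intro v
  funext t
  have := xiFun_spec hΔ v t
  simp only [Pi.sub_apply]
  rw [this]
  abel
end

section
/- If Φₓ, Φᵤ satisfy the nominal achievability constraint (I − S₊A₀)Φₓ − S₊B₀Φᵤ = S₊, then for any bounded causal perturbations Δ_A, Δ_B, the perturbed constraint (I − S₊(A₀+Δ_A))Φₓ − S₊(B₀+Δ_B)Φᵤ = S₊(I − Δ̂) holds with Δ̂ := Δ_AΦₓ + Δ_BΦᵤ, and Δ̂ is bounded; moreover ‖Δ̂‖ ≤ ‖[Δ_A, Δ_B]‖ · max(‖Φₓ‖, ‖Φᵤ‖) in an appropriate sense: ‖Δ̂w‖∞ ≤ ‖Δ_A‖‖Φₓw‖∞ + ‖Δ_B‖‖Φᵤw‖∞. -/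
/-- The space `ℓ∞ⁿ` of bounded `ℝⁿ`-valued sequences with the sup norm. -/
noncomputable abbrev LinfSeq (n : ℕ) := lp (fun _ : ℕ => (Fin n → ℝ)) ⊤

set_option maxHeartbeats 2000000 in
set_option synthInstance.maxHeartbeats 1000000 in
/-- If `Φₓ, Φᵤ` satisfy the nominal achievability constraint
`(I − S₊A₀)Φₓ − S₊B₀Φᵤ = S₊`, then for any bounded causal perturbations `Δ_A, Δ_B` the
perturbed constraint `(I − S₊(A₀+Δ_A))Φₓ − S₊(B₀+Δ_B)Φᵤ = S₊(I − Δ̂)` holds with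
`Δ̂ := Δ_AΦₓ + Δ_BΦᵤ`, which is bounded, and moreover
`‖Δ̂w‖∞ ≤ ‖Δ_A‖‖Φₓw‖∞ + ‖Δ_B‖‖Φᵤw‖∞` for every `w`. -/
theorem stmt14 {n p : ℕ}
    (Splus : LinfSeq n →L[ℝ] LinfSeq n)
    (hS : ∀ x : LinfSeq n, ((Splus x : ℕ → (Fin n → ℝ)) 0 = 0 ∧
      ∀ t : ℕ, (Splus x : ℕ → (Fin n → ℝ)) (t + 1) = (x : ℕ → (Fin n → ℝ)) t))
    (A₀ ΔA : LinfSeq n →L[ℝ] LinfSeq n)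
    (B₀ ΔB : LinfSeq p →L[ℝ] LinfSeq n)
    (Φx : LinfSeq n →L[ℝ] LinfSeq n)
    (Φu : LinfSeq n →L[ℝ] LinfSeq p)
    (hnominal :
      (1 - Splus * A₀) * Φx - Splus.comp (B₀.comp Φu) = Splus) :
    (1 - Splus * (A₀ + ΔA)) * Φx - Splus.comp ((B₀ + ΔB).comp Φu)
        = Splus * (1 - (ΔA * Φx + ΔB.comp Φu)) ∧
    (∀ w : LinfSeq n,
      ‖(ΔA * Φx + ΔB.comp Φu) w‖ ≤ ‖ΔA‖ * ‖Φx w‖ + ‖ΔB‖ * ‖Φu w‖) := by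
  constructor
  · have hcomp : ∀ Y : LinfSeq n →L[ℝ] LinfSeq n, Splus.comp Y = Splus * Y := fun _ => rfl
    rw [ContinuousLinearMap.add_comp, hcomp]
    rw [hcomp] at hnominal
    set C := B₀.comp Φu
    set D := ΔB.comp Φu
    have h3 : Φx - Splus * (A₀ * Φx) - Splus * C = Splus := by
      rw [sub_mul, one_mul, mul_assoc] at hnominal
      exact hnominal
    apply eq_of_sub_eq_zero
    calc (1 - Splus * (A₀ + ΔA)) * Φx - Splus * (C + D)
          - Splus * (1 - (ΔA * Φx + D))
        = (Φx - Splus * (A₀ * Φx) - Splus * C) - Splus := by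
          simp only [mul_add, add_mul, sub_mul, mul_sub, mul_one, one_mul, mul_assoc]
          abel
      _ = 0 := by rw [h3]; exact sub_self Splus
  · intro w
    calc ‖(ΔA * Φx + ΔB.comp Φu) w‖ ≤ ‖ΔA (Φx w)‖ + ‖ΔB (Φu w)‖ := norm_add_le _ _
    _ ≤ ‖ΔA‖ * ‖Φx w‖ + ‖ΔB‖ * ‖Φu w‖ := add_le_add (ΔA.le_opNorm _) (ΔB.le_opNorm _)
end

section
/- Small gain sufficiency for robust performance: let Q, Φ, Δ be bounded linear operators on a Banach space with ‖Δ‖ ≤ 1, ε > 0, γ > 0, and suppose ‖QΦ‖ + γ‖εΦ‖ < γ. Then ε‖Φ‖ < 1, so (I − εΦΔ) is boundedly invertible, and the perturbed performance map satisfies ‖QΦ + QΦΔ(I − εΦΔ)⁻¹εΦ‖ ≤ ‖QΦ‖/(1 − ε‖Φ‖) ≤ γ. -/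
open ContinuousLinearMap in
/-- Small gain sufficiency for robust performance: if `‖Δ‖ ≤ 1`, `ε, γ > 0` and
`‖QΦ‖ + γ‖εΦ‖ < γ`, then `ε‖Φ‖ < 1`, `I − εΦΔ` is boundedly invertible, and the perturbed
performance map satisfies `‖QΦ + QΦΔ(I − εΦΔ)⁻¹εΦ‖ ≤ ‖QΦ‖ / (1 − ε‖Φ‖) ≤ γ`. -/
theorem stmt15 {X Y : Type*} [NormedAddCommGroup X] [NormedSpace ℝ X] [CompleteSpace X]
    [NormedAddCommGroup Y] [NormedSpace ℝ Y]
    (Q : X →L[ℝ] Y) (Φ Δ : X →L[ℝ] X)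
    (ε γ : ℝ) (hε : 0 < ε) (hγ : 0 < γ) (hΔ : ‖Δ‖ ≤ 1)
    (hperf : ‖Q.comp Φ‖ + γ * ‖ε • Φ‖ < γ) :
    ε * ‖Φ‖ < 1 ∧
    IsUnit (1 - ε • (Φ * Δ)) ∧
    ‖Q.comp Φ + ((Q.comp Φ).comp Δ).comp
        ((Ring.inverse (1 - ε • (Φ * Δ))).comp (ε • Φ))‖
      ≤ ‖Q.comp Φ‖ / (1 - ε * ‖Φ‖) ∧
    ‖Q.comp Φ‖ / (1 - ε * ‖Φ‖) ≤ γ := by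
  have hsm : ‖ε • Φ‖ = ε * ‖Φ‖ := by
    rw [norm_smul ε Φ, Real.norm_of_nonneg hε.le]
  have hQ0 : (0 : ℝ) ≤ ‖Q.comp Φ‖ := norm_nonneg _
  have h1 : ε * ‖Φ‖ < 1 := by
    rw [hsm] at hperf
    nlinarith
  set t := ε • (Φ * Δ) with ht
  have htn : ‖t‖ ≤ ε * ‖Φ‖ := by
    rw [ht, norm_smul ε (Φ * Δ), Real.norm_of_nonneg hε.le]
    exact mul_le_mul_of_nonneg_left
      ((norm_mul_le Φ Δ).trans (by nlinarith [norm_nonneg Φ])) hε.le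
  have htn1 : ‖t‖ < 1 := lt_of_le_of_lt htn h1
  have hunit : IsUnit (1 - t) := isUnit_one_sub_of_norm_lt_one htn1
  have hpos : (0 : ℝ) < 1 - ε * ‖Φ‖ := by linarith
  have hinv : ‖Ring.inverse (1 - t)‖ ≤ (1 - ε * ‖Φ‖)⁻¹ := by
    rw [← geom_series_eq_inverse t htn1]
    refine (tsum_geometric_le_of_norm_lt_one t htn1).trans ?_
    have hone : ‖(1 : X →L[ℝ] X)‖ ≤ 1 := norm_id_le
    have : (1 - ‖t‖)⁻¹ ≤ (1 - ε * ‖Φ‖)⁻¹ := by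
      apply inv_anti₀ hpos; linarith
    linarith
  refine ⟨h1, hunit, ?_, ?_⟩
  · have hb : ‖((Q.comp Φ).comp Δ).comp ((Ring.inverse (1 - t)).comp (ε • Φ))‖
        ≤ ‖Q.comp Φ‖ * ((1 - ε * ‖Φ‖)⁻¹ * (ε * ‖Φ‖)) := by
      calc ‖((Q.comp Φ).comp Δ).comp ((Ring.inverse (1 - t)).comp (ε • Φ))‖
          ≤ ‖(Q.comp Φ).comp Δ‖ * ‖(Ring.inverse (1 - t)).comp (ε • Φ)‖ := opNorm_comp_le _ _
        _ ≤ (‖Q.comp Φ‖ * ‖Δ‖) * (‖Ring.inverse (1 - t)‖ * ‖ε • Φ‖) := by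
            gcongr <;> exact opNorm_comp_le _ _
        _ ≤ (‖Q.comp Φ‖ * 1) * ((1 - ε * ‖Φ‖)⁻¹ * (ε * ‖Φ‖)) := by
            rw [hsm]
            gcongr
        _ = ‖Q.comp Φ‖ * ((1 - ε * ‖Φ‖)⁻¹ * (ε * ‖Φ‖)) := by ring
    calc ‖Q.comp Φ + ((Q.comp Φ).comp Δ).comp ((Ring.inverse (1 - t)).comp (ε • Φ))‖
        ≤ ‖Q.comp Φ‖ + ‖((Q.comp Φ).comp Δ).comp ((Ring.inverse (1 - t)).comp (ε • Φ))‖ :=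
          norm_add_le _ _
      _ ≤ ‖Q.comp Φ‖ + ‖Q.comp Φ‖ * ((1 - ε * ‖Φ‖)⁻¹ * (ε * ‖Φ‖)) := by linarith
      _ = ‖Q.comp Φ‖ / (1 - ε * ‖Φ‖) := by
          field_simp
          ring
  · rw [div_le_iff₀ hpos]
    rw [hsm] at hperf
    nlinarith
end

section
/- Scaling invariance of robust stability: let Φ be a bounded linear operator on a Hilbert space and let ε > 0. If ε‖Φ‖ < 1, then (I − εΦΔ) is invertible for every bounded linear Δ with ‖Δ‖ ≤ 1; conversely, if ‖εΦ‖ > 1, there exists a bounded Δ with ‖Δ‖ ≤ 1 such that (I − εΦΔ) is not invertible. -/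
/-- Small gain necessity and sufficiency for unstructured full-block uncertainty on a Hilbert
space: if `ε‖Φ‖ < 1` then `I − εΦΔ` is boundedly invertible for every `Δ` with `‖Δ‖ ≤ 1`;
conversely, if `‖εΦ‖ > 1` then there exists `Δ` with `‖Δ‖ ≤ 1` such that `I − εΦΔ` is not
invertible. -/
theorem stmt18 {H : Type*} [NormedAddCommGroup H] [InnerProductSpace ℝ H] [CompleteSpace H]
    (Φ : H →L[ℝ] H) (ε : ℝ) (hε : 0 < ε) :
    (ε * ‖Φ‖ < 1 → ∀ Δ : H →L[ℝ] H, ‖Δ‖ ≤ 1 → IsUnit (1 - ε • (Φ * Δ))) ∧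
    (1 < ‖ε • Φ‖ → ∃ Δ : H →L[ℝ] H, ‖Δ‖ ≤ 1 ∧ ¬ IsUnit (1 - ε • (Φ * Δ))) := by
  constructor
  · intro h Δ hΔ
    have hnorm : ‖ε • (Φ * Δ)‖ < 1 := by
      have h1 : ‖ε • (Φ * Δ)‖ ≤ ε * (‖Φ‖ * ‖Δ‖) := by
        refine (norm_smul_le ε (Φ * Δ)).trans ?_
        rw [Real.norm_eq_abs, abs_of_pos hε]
        exact mul_le_mul_of_nonneg_left (norm_mul_le Φ Δ) hε.le
      calc ‖ε • (Φ * Δ)‖ ≤ ε * (‖Φ‖ * ‖Δ‖) := h1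
        _ ≤ ε * ‖Φ‖ := by
            rw [← mul_assoc]
            exact mul_le_of_le_one_right (by positivity) hΔ
        _ < 1 := h
    exact (Units.oneSub _ hnorm).isUnit
  · intro h
    obtain ⟨x, hx1, hx⟩ := (ε • Φ).exists_lt_apply_of_lt_opNorm h
    set y : H := (ε • Φ) x with hy
    have hxy : ‖x‖ < ‖y‖ := hx1.trans hx
    have hy0 : 0 < ‖y‖ := lt_of_le_of_lt (norm_nonneg x) hxy
    have hyne : y ≠ 0 := by
      intro h0; rw [h0, norm_zero] at hy0; exact lt_irrefl 0 hy0
    set Δ : H →L[ℝ] H := (‖y‖ ^ 2)⁻¹ • (innerSL ℝ y).smulRight x with hΔdef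
    refine ⟨Δ, ?_, ?_⟩
    · have hn : ‖Δ‖ ≤ (‖y‖ ^ 2)⁻¹ * (‖y‖ * ‖x‖) := by
        rw [hΔdef]
        refine (norm_smul_le ((‖y‖ ^ 2)⁻¹) ((innerSL ℝ y).smulRight x)).trans ?_
        rw [Real.norm_eq_abs, abs_of_nonneg (by positivity)]
        gcongr
        rw [ContinuousLinearMap.norm_smulRight_apply, innerSL_apply_norm]
      have : (‖y‖ ^ 2)⁻¹ * (‖y‖ * ‖x‖) = ‖x‖ / ‖y‖ := by
        field_simp
      rw [this] at hn
      exact hn.trans (by rw [div_le_one hy0]; exact hxy.le)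
    · intro hu
      have hΔy : Δ y = x := by
        rw [hΔdef]
        simp only [ContinuousLinearMap.smul_apply, ContinuousLinearMap.smulRight_apply,
          innerSL_apply_apply]
        rw [real_inner_self_eq_norm_sq]
        rw [smul_smul, inv_mul_cancel₀ (by positivity), one_smul]
      have hker : (1 - ε • (Φ * Δ)) y = 0 := by
        simp only [ContinuousLinearMap.sub_apply, ContinuousLinearMap.one_apply,
          ContinuousLinearMap.smul_apply, ContinuousLinearMap.mul_apply, hΔy]
        rw [sub_eq_zero, hy]
        simp
      obtain ⟨u, hu'⟩ := hu
      have : y = 0 := by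
        have h1 : (↑u⁻¹ : H →L[ℝ] H) ((1 - ε • (Φ * Δ)) y) = y := by
          rw [← hu', ← ContinuousLinearMap.mul_apply, Units.inv_mul]
          rfl
        rw [hker, map_zero] at h1
        exact h1.symm
      exact hyne this
end
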